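/- For all k ≥ 1 and all n with 2^(2k-1) ≤ n ≤ 2^(2k) − 1, s(n + 2^(2k)) = −s(n) + 3·2^k. -/

import Mathlib

def rs : ℕ → ℤ
  | 0 => 1
  | (n+1) =>
    if (n+1) % 2 = 0 then rs ((n+1)/2)
    else (-1)^((n+1)/2) * rs ((n+1)/2)
decreasing_by all_goals exact Nat.div_lt_self (Nat.succ_pos n) (by norm_num)

def s (n : ℕ) : ℤ := ∑ i ∈ Finset.range (n+1), rs i

def t (n : ℕ) : ℤ := ∑ i ∈ Finset.range (n+1), (-1)^i * rs i

open Finset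

/-!
Write `S x = ∑_{i<x} a(i)` and `T x = ∑_{i<x} (-1)^i a(i)`. For `j < 2^(m+1)`, adding `2^(m+1)`
to `j` multiplies `a(j)` by `(-1)` to the power of bit `m` of `j`; hence for `M = 2^m ≤ n < 2M`,
splitting `s(2M + n)` into blocks gives `s(2M + n) = S(2M) + 2 S(M) - s(n)`. Pairing the terms
`2i, 2i+1` gives `S(2x) = S x + T x` and `T(2x) = S x - T x`, so `S(4^k) = T(4^k) = 2^k` and
`S(2·4^k) = 2^(k+1)`. With `m = 2k - 1` both sums are `2^k`.
-/

lemma rs_two_mul (n : ℕ) : rs (2 * n) = rs n := by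
  cases n with
  | zero => rfl
  | succ n =>
    rw [show 2 * (n + 1) = 2 * n + 1 + 1 by ring, rs, if_pos (by omega),
      show (2 * n + 1 + 1) / 2 = n + 1 by omega]

lemma rs_two_mul_add_one (n : ℕ) : rs (2 * n + 1) = (-1) ^ n * rs n := by
  rw [rs]
  simp [show (2 * n + 1) / 2 = n by omega]

lemma rs_two_mul_add_of_even {P j : ℕ} {ε : ℤ} (hP : Even P)
    (h : rs (P + j / 2) = ε * rs (j / 2)) : rs (2 * P + j) = ε * rs j := by
  obtain ⟨q, rfl | rfl⟩ := Nat.even_or_odd' j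
  · rw [Nat.mul_div_cancel_left q two_pos] at h
    rw [← mul_add, rs_two_mul, rs_two_mul, h]
  · rw [show (2 * q + 1) / 2 = q by omega] at h
    rw [← add_assoc, ← mul_add, rs_two_mul_add_one, rs_two_mul_add_one, h, pow_add,
      hP.neg_one_pow]
    ring

-- The new leading bit forms a block `11` with bit `m` of `j` exactly when that bit is set.
lemma rs_two_pow_succ_add {m j : ℕ} (hj : j < 2 ^ (m + 1)) :
    rs (2 ^ (m + 1) + j) = (-1) ^ (j / 2 ^ m) * rs j := by
  induction m generalizing j with
  | zero =>
    have h₁ : rs 1 = rs 0 := by simpa using rs_two_mul_add_one 0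
    interval_cases j
    · simpa [h₁] using rs_two_mul 1
    · simpa using rs_two_mul_add_one 1
  | succ m ih =>
    have hj2 : j / 2 < 2 ^ (m + 1) := by rw [pow_succ] at hj; omega
    have hdiv : j / 2 ^ (m + 1) = j / 2 / 2 ^ m := by rw [Nat.div_div_eq_div_mul, ← pow_succ']
    rw [pow_succ' 2 (m + 1), hdiv]
    exact rs_two_mul_add_of_even (Nat.even_pow.2 ⟨even_two, m.succ_ne_zero⟩) (ih hj2)

lemma sum_range_two_mul {M : Type*} [AddCommMonoid M] (f : ℕ → M) (n : ℕ) :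
    ∑ i ∈ range (2 * n), f i = ∑ i ∈ range n, (f (2 * i) + f (2 * i + 1)) := by
  induction n with
  | zero => simp
  | succ n ih =>
    rw [show 2 * (n + 1) = 2 * n + 1 + 1 by ring, sum_range_succ, sum_range_succ, ih,
      sum_range_succ, add_assoc]

lemma sum_range_two_mul_rs (n : ℕ) :
    ∑ i ∈ range (2 * n), rs i
      = ∑ i ∈ range n, rs i + ∑ i ∈ range n, (-1) ^ i * rs i := by
  rw [sum_range_two_mul, ← sum_add_distrib]
  simp only [rs_two_mul, rs_two_mul_add_one]

lemma sum_range_two_mul_neg_one_pow_mul_rs (n : ℕ) :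
    ∑ i ∈ range (2 * n), (-1) ^ i * rs i
      = ∑ i ∈ range n, rs i - ∑ i ∈ range n, (-1) ^ i * rs i := by
  rw [sum_range_two_mul, ← sum_sub_distrib]
  refine sum_congr rfl fun i _ => ?_
  rw [rs_two_mul, rs_two_mul_add_one, pow_succ, pow_mul]
  ring

lemma sum_range_four_pow_rs (k : ℕ) :
    ∑ i ∈ range (4 ^ k), rs i = 2 ^ k ∧ ∑ i ∈ range (4 ^ k), (-1) ^ i * rs i = 2 ^ k := by
  induction k with
  | zero => simp [rs]
  | succ k ih =>
    rw [pow_succ', show 4 * 4 ^ k = 2 * (2 * 4 ^ k) by ring]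
    simp only [sum_range_two_mul_rs, sum_range_two_mul_neg_one_pow_mul_rs, ih.1, ih.2]
    constructor <;> ring

lemma sum_range_two_mul_four_pow_rs (k : ℕ) :
    ∑ i ∈ range (2 * 4 ^ k), rs i = 2 ^ (k + 1) := by
  rw [sum_range_two_mul_rs, (sum_range_four_pow_rs k).1, (sum_range_four_pow_rs k).2]
  ring

lemma s_two_mul_two_pow_add {m n : ℕ} (h₁ : 2 ^ m ≤ n) (h₂ : n < 2 * 2 ^ m) :
    s (2 * 2 ^ m + n)
      = ∑ i ∈ range (2 * 2 ^ m), rs i + 2 * ∑ i ∈ range (2 ^ m), rs i - s n := by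
  have hlow : ∀ i ∈ range (2 ^ m), rs (2 * 2 ^ m + i) = rs i := fun i hi => by
    rw [← pow_succ', rs_two_pow_succ_add (by rw [mem_range] at hi; omega),
      Nat.div_eq_of_lt (mem_range.1 hi), pow_zero, one_mul]
  have hhigh : ∀ i ∈ Ico (2 ^ m) (n + 1), rs (2 * 2 ^ m + i) = -rs i := fun i hi => by
    obtain ⟨hi₁, hi₂⟩ := mem_Ico.1 hi
    rw [← pow_succ', rs_two_pow_succ_add (by omega),
      Nat.div_eq_of_lt_le (by rwa [one_mul]) (by omega), pow_one, neg_one_mul]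
  have hmn : 2 ^ m ≤ n + 1 := by omega
  have hsplit := sum_range_add_sum_Ico (fun i => rs (2 * 2 ^ m + i)) hmn
  rw [sum_congr rfl hlow, sum_congr rfl hhigh, sum_neg_distrib, sum_Ico_eq_sub _ hmn] at hsplit
  rw [s, s, show 2 * 2 ^ m + n + 1 = 2 * 2 ^ m + (n + 1) by ring, sum_range_add, ← hsplit]
  ring

theorem stmt8 : ∀ k : ℕ, 1 ≤ k → ∀ n : ℕ, 2^(2*k-1) ≤ n → n ≤ 2^(2*k) - 1 →
    s (n + 2^(2*k)) = -s n + 3 * 2^k := by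
  intro k hk n h₁ h₂
  obtain ⟨k, rfl⟩ : ∃ j, k = j + 1 := ⟨k - 1, by omega⟩
  have hM : 2 ^ (2 * (k + 1) - 1) = 2 ^ (2 * k + 1) := by
    rw [show 2 * (k + 1) - 1 = 2 * k + 1 by omega]
  have hN : 2 ^ (2 * (k + 1)) = 2 * 2 ^ (2 * k + 1) := by ring
  have hM' : 2 ^ (2 * k + 1) = 2 * 4 ^ k := by rw [pow_succ', pow_mul]; norm_num
  have hN' : 2 * 2 ^ (2 * k + 1) = 4 ^ (k + 1) := by rw [hM']; ring
  rw [hM] at h₁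
  rw [hN] at h₂ ⊢
  have hpos := Nat.one_le_two_pow (n := 2 * k + 1)
  rw [add_comm, s_two_mul_two_pow_add h₁ (by omega), hN', (sum_range_four_pow_rs _).1, hM',
    sum_range_two_mul_four_pow_rs]
  ring
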